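/- Let F ⊆ [P_{n+l−1}]_{≥l} be an upper filter, suppose m < n, and let f ∈ J_{l,m,F} := (Δ_m) ∩ J_{l,F} be written as f = g_d x_n^d + … + g_1 x_n + g_0 with g_0,…,g_d ∈ K[x_1,…,x_{n−1}] and g_d ≠ 0. Then g_0,…,g_d all belong to J_{l,m,F_{d+1}} := (Δ_m) ∩ J_{l,F_{d+1}}, the corresponding ideal of K[x_1,…,x_{n−1}]. -/

import Mathlib

/-!
Since `Δ_m` does not involve `x_n`, divisibility by it passes from `f` to the coefficients `g_i`.
For the vanishing, fix `a` with `Λ_l(a) = μ` and `μ + ⟨d+1⟩ ∈ F`, and regard `t ↦ f(a, t)` as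
a polynomial of degree `≤ d`. Appending a value `t` of multiplicity `c` among the coordinates
of `a_{(l)}` raises one part `c` of `μ` to `c + 1` (adds a part `1` if `c = 0`); when
`c ≥ μ_{d+1}` the result dominates `μ + ⟨d+1⟩`, so it lies in `F` and `f(a, t) = 0`. There are
more than `d` such `t`: the values filling the first `d + 1` rows of `μ`, or all of the infinite
field `K` if `μ` has at most `d` rows. Hence `f(a, ·) = 0` and every `g_i(a) = 0`.
-/

open MvPolynomial

namespace SpechtLL

/-- A partition of `N`: a non-increasing list of positive integers summing to `N`. -/
structure Partition (N : ℕ) where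
  parts : List ℕ
  sorted : parts.Pairwise (· ≥ ·)
  pos : ∀ p ∈ parts, 0 < p
  sum_eq : parts.sum = N

/-- `domLE ν μ` means ν ⊴ μ in the dominance order. -/
def domLE {N : ℕ} (nu mu : Partition N) : Prop :=
  ∀ i : ℕ, (nu.parts.take i).sum ≤ (mu.parts.take i).sum

/-- The first (largest) part λ₁ of a partition. -/
def partOne {N : ℕ} (lam : Partition N) : ℕ := lam.parts.headD 0

/-- The cells (i, j) (row i, column j, 0-indexed) of the Young diagram of a partition. -/
def cells {N : ℕ} (lam : Partition N) : Finset (ℕ × ℕ) :=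
  (Finset.range lam.parts.length ×ˢ Finset.range (partOne lam)).filter
    (fun c => c.2 < lam.parts.getD c.1 0)

/-- The length λ⊥ⱼ of the j-th column of the Young diagram. -/
def colLen {N : ℕ} (lam : Partition N) (j : ℕ) : ℕ :=
  lam.parts.countP (fun p => decide (j < p))

/-- The list of entries of the j-th column of a filling `T`, from top to bottom. -/
def colList {n N : ℕ} (lam : Partition N) (T : ℕ × ℕ → Fin n) (j : ℕ) : List (Fin n) :=
  (List.range (colLen lam j)).map fun i => T (i, j)

/-- The multiset of entries: `l` copies of the special entry `sp` and each other
element of `Fin n` exactly once. -/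
def fillContent (n : ℕ) (l : ℕ) (sp : Fin n) : Multiset (Fin n) :=
  Multiset.replicate (l - 1) sp + (Finset.univ : Finset (Fin n)).val

/-- `T` is a filling of the diagram of `lam` by the multiset consisting of `l` copies of `sp`
and each other element of `Fin n` once, with no two copies of `sp` in the same column. -/
def IsFilling {n N : ℕ} (l : ℕ) (sp : Fin n) (lam : Partition N) (T : ℕ × ℕ → Fin n) : Prop :=
  (cells lam).val.map T = fillContent n l sp ∧
    ∀ j : ℕ, (colList lam T j).count sp ≤ 1

/-- Standard tableau: columns strictly increase from top to bottom and rows are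
non-decreasing from left to right. -/
def IsStandard {n N : ℕ} (lam : Partition N) (T : ℕ × ℕ → Fin n) : Prop :=
  (∀ i j : ℕ, (i + 1, j) ∈ cells lam → T (i, j) < T (i + 1, j)) ∧
  (∀ i j : ℕ, (i, j + 1) ∈ cells lam → T (i, j) ≤ T (i, j + 1))

variable (K : Type*) [Field K]

/-- The difference product of a list of (indices of) variables. -/
noncomputable def deltaList {n : ℕ} : List (Fin n) → MvPolynomial (Fin n) K
  | [] => 1
  | a :: rest => ((rest.map fun b => X a - X b).prod) * deltaList rest

/-- The Specht polynomial of a filling `T` of shape `lam`. -/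
noncomputable def spechtPoly {n N : ℕ} (lam : Partition N) (T : ℕ × ℕ → Fin n) : MvPolynomial (Fin n) K :=
  ((List.range (partOne lam)).map fun j => deltaList K (colList lam T j)).prod

/-- The Specht ideal generated by all Specht polynomials of fillings of shape `lam`
(with `l` copies of the special entry `sp`). -/
noncomputable def spechtIdeal {n N : ℕ} (l : ℕ) (sp : Fin n) (lam : Partition N) :
    Ideal (MvPolynomial (Fin n) K) :=
  Ideal.span {f | ∃ T, IsFilling l sp lam T ∧ f = spechtPoly K lam T}

/-- The lexicographic order on monomials with x₁ < x₂ < ⋯ < xₙ: the larger monomial is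
decided at the highest-index variable where the exponents differ. -/
def lexLt {n : ℕ} (a b : Fin n →₀ ℕ) : Prop :=
  ∃ i : Fin n, a i < b i ∧ ∀ j : Fin n, i < j → a j = b j

/-- A monomial order: a strict linear order on exponent vectors compatible with
addition and having 0 as least element. -/
def IsMonomialOrder {n : ℕ} (lt : (Fin n →₀ ℕ) → (Fin n →₀ ℕ) → Prop) : Prop :=
  (∀ a b c, lt a b → lt b c → lt a c) ∧
  (∀ a, ¬ lt a a) ∧
  (∀ a b, a = b ∨ lt a b ∨ lt b a) ∧
  (∀ a b c, lt a b → lt (a + c) (b + c)) ∧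
  (∀ a, a ≠ 0 → lt 0 a)

/-- `d` is the exponent vector of the initial monomial of `f` with respect to the
monomial order `lt`. -/
def IsInitialFor {n : ℕ} (lt : (Fin n →₀ ℕ) → (Fin n →₀ ℕ) → Prop)
    (f : MvPolynomial (Fin n) K) (d : Fin n →₀ ℕ) : Prop :=
  d ∈ f.support ∧ ∀ e ∈ f.support, e ≠ d → lt e d

/-- `G` is a Gröbner basis of `I` w.r.t. `lt`: `G ⊆ I` and the initial monomial of every
nonzero element of `I` is divisible by the initial monomial of some element of `G`. -/
def IsGroebnerBasisFor {n : ℕ} (lt : (Fin n →₀ ℕ) → (Fin n →₀ ℕ) → Prop)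
    (G : Set (MvPolynomial (Fin n) K)) (I : Ideal (MvPolynomial (Fin n) K)) : Prop :=
  (∀ g ∈ G, g ∈ I) ∧
  ∀ f ∈ I, f ≠ 0 → ∀ d, IsInitialFor K lt f d →
    ∃ g ∈ G, ∃ e, IsInitialFor K lt g e ∧ e ≤ d

/-- The ideal of polynomials vanishing on all points satisfying `P`. -/
def vanishingIdeal (n : ℕ) (P : (Fin n → K) → Prop) : Ideal (MvPolynomial (Fin n) K) where
  carrier := {f | ∀ a : Fin n → K, P a → MvPolynomial.eval a f = 0}
  add_mem' := by
    intro f g hf hg a ha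
    simp only [Set.mem_setOf_eq] at *
    rw [map_add, hf a ha, hg a ha, add_zero]
  zero_mem' := by intro a _; simp
  smul_mem' := by
    intro c f hf a ha
    simp only [Set.mem_setOf_eq, smul_eq_mul, map_mul] at *
    rw [hf a ha, mul_zero]

/-- `mu` is the multiplicity partition of the multiset `M`: the parts of `mu` are
exactly the multiplicities of the distinct elements of `M`. -/
def IsMultPartition {M' : ℕ} [DecidableEq K] (M : Multiset K) (mu : Partition M') : Prop :=
  (↑mu.parts : Multiset ℕ) = M.toFinset.val.map fun α => M.count α

/-- The multiset of values of the vector `a_{(l)} ∈ K^{n+l-1}` obtained from `a ∈ Kⁿ`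
by repeating the first coordinate `l` times. -/
def lamL {n : ℕ} [NeZero n] (l : ℕ) (a : Fin n → K) : Multiset K :=
  Multiset.replicate (l - 1) (a 0) + (Finset.univ : Finset (Fin n)).val.map a

/-- The multiset of parts of the partition `mu + ⟨i⟩` (i is 1-indexed). -/
def addBoxMultiset {N : ℕ} (mu : Partition N) (i : ℕ) : Multiset ℕ :=
  if i ≤ mu.parts.length then
    ((↑mu.parts : Multiset ℕ).erase (mu.parts.getD (i - 1) 0)) + {mu.parts.getD (i - 1) 0 + 1}
  else ↑mu.parts + {1}

/-- `nu = mu + ⟨i⟩`. -/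
def IsAddBox {N M : ℕ} (mu : Partition N) (i : ℕ) (nu : Partition M) : Prop :=
  (↑nu.parts : Multiset ℕ) = addBoxMultiset mu i

/-- The largest element of `Fin n`. -/
def finLast (n : ℕ) [NeZero n] : Fin n := ⟨n - 1, by have := NeZero.ne n; omega⟩

/-- The number `w(T)` of squares of `T` lying above some square filled with `sp`. -/
def wval {n N : ℕ} (lam : Partition N) (sp : Fin n) (T : ℕ × ℕ → Fin n) : ℕ :=
  ((cells lam).filter fun c =>
    ∃ i' ∈ Finset.range (colLen lam c.2), c.1 < i' ∧ T (i', c.2) = sp).card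

/-- `mu = sh_{<n}(T)`: the shape obtained from `T` (of shape `lam`) by removing all
squares filled with `sp`, described via column lengths. -/
def HasShapeRemoved {n N M : ℕ} (lam : Partition N) (sp : Fin n) (T : ℕ × ℕ → Fin n)
    (mu : Partition M) : Prop :=
  ∀ j : ℕ, colLen mu j + (colList lam T j).count sp = colLen lam j

/-- Difference product of a list, omitting the factors where both indices are < m. -/
noncomputable def deltaListAvoid (m : ℕ) {n : ℕ} : List (Fin n) → MvPolynomial (Fin n) K
  | [] => 1
  | a :: rest =>
      ((rest.filter fun b => decide (m ≤ a.val ∨ m ≤ b.val)).map fun b => X a - X b).prod *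
        deltaListAvoid m rest

/-- Δ_m = Δ({1, …, m}), the difference product of the first m variables. -/
noncomputable def deltaM (n m : ℕ) : MvPolynomial (Fin n) K :=
  deltaList K ((List.finRange n).take m)

/-- `f_{m,T} = lcm(f_T, Δ_m)`: the product of `Δ_m` with all factors of the Specht
polynomial `f_T` not already occurring in `Δ_m`. -/
noncomputable def fmPoly {n N : ℕ} (m : ℕ) (lam : Partition N) (T : ℕ × ℕ → Fin n) :
    MvPolynomial (Fin n) K :=
  deltaM K n m *
    ((List.range (partOne lam)).map fun j => deltaListAvoid K m (colList lam T j)).prod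

/-- The ideal `I_{l,m,λ}` generated by the `f_{m,T}`, `T ∈ Tab(l,λ)`. -/
noncomputable def spechtIdealM {n N : ℕ} (m l : ℕ) (sp : Fin n) (lam : Partition N) :
    Ideal (MvPolynomial (Fin n) K) :=
  Ideal.span {f | ∃ T, IsFilling l sp lam T ∧ f = fmPoly K m lam T}

section BumpList

/-- Add one box to the first row of length `≤ c` of the partition `L` (a new row of length `1`
if there is none); for `c` a part of `L` this turns one part `c` into `c + 1`. -/
def bumpList (c : ℕ) : List ℕ → List ℕ
  | [] => [1]
  | a :: rest => if c < a then a :: bumpList c rest else (a + 1) :: rest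

variable {c : ℕ} {L : List ℕ}

theorem sum_bumpList : (bumpList c L).sum = L.sum + 1 := by
  induction L with
  | nil => rfl
  | cons a rest ih =>
    by_cases h : c < a
    · rw [bumpList, if_pos h, List.sum_cons, List.sum_cons, ih, Nat.add_assoc]
    · rw [bumpList, if_neg h, List.sum_cons, List.sum_cons]
      omega

theorem mem_bumpList {x : ℕ} (hx : x ∈ bumpList c L) : x ∈ L ∨ 0 < x ∧ x ≤ c + 1 := by
  induction L with
  | nil => simp_all [bumpList]
  | cons a rest ih =>
    by_cases h : c < a
    · simp only [bumpList, h, if_true, List.mem_cons] at hx ⊢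
      rcases hx with rfl | hx
      · exact Or.inl (Or.inl rfl)
      · exact (ih hx).imp_left Or.inr
    · simp only [bumpList, h, if_false, List.mem_cons] at hx ⊢
      rcases hx with rfl | hx
      · exact Or.inr ⟨by omega, by omega⟩
      · exact Or.inl (Or.inr hx)

theorem pairwise_bumpList (hs : L.Pairwise (· ≥ ·)) : (bumpList c L).Pairwise (· ≥ ·) := by
  induction L with
  | nil => simp [bumpList]
  | cons a rest ih =>
    rw [List.pairwise_cons] at hs
    by_cases h : c < a
    · rw [bumpList, if_pos h, List.pairwise_cons]
      refine ⟨fun x hx => ?_, ih hs.2⟩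
      rcases mem_bumpList hx with hx | hx
      · exact hs.1 x hx
      · omega
    · rw [bumpList, if_neg h, List.pairwise_cons]
      exact ⟨fun x hx => Nat.le_succ_of_le (hs.1 x hx), hs.2⟩

theorem headD_le_headD_bumpList : L.headD 0 ≤ (bumpList c L).headD 0 := by
  cases L with
  | nil => simp [bumpList]
  | cons a rest => by_cases h : c < a <;> simp [bumpList, h]

theorem coe_bumpList (hs : L.Pairwise (· ≥ ·)) (hpos : ∀ x ∈ L, 0 < x) (hc : c ∈ L ∨ c = 0) :
    (bumpList c L : Multiset ℕ) = (L : Multiset ℕ).erase c + {c + 1} := by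
  induction L with
  | nil => simp_all [bumpList]
  | cons a rest ih =>
    rw [List.pairwise_cons] at hs
    by_cases h : c < a
    · have hc' : c ∈ rest ∨ c = 0 := by
        rcases hc with hc | hc
        · exact Or.inl ((List.mem_cons.1 hc).resolve_left h.ne)
        · exact Or.inr hc
      rw [bumpList, if_pos h, ← Multiset.cons_coe, ← Multiset.cons_coe,
        Multiset.erase_cons_tail _ h.ne', ih hs.2 (fun x hx => hpos x (by simp [hx])) hc',
        Multiset.cons_add]
    · have hac : a = c := by
        rcases hc with hc | rfl
        · rcases List.mem_cons.1 hc with hc | hc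
          · exact hc.symm
          · have := hs.1 c hc; omega
        · have := hpos a (by simp); omega
      subst hac
      rw [bumpList, if_neg h, ← Multiset.cons_coe, ← Multiset.cons_coe, Multiset.erase_cons_head,
        ← Multiset.singleton_add, add_comm]

/-- The box is added in row `L.countP (c < ·)`, so the first `k` rows gain a box iff that row is
among them. -/
theorem sum_take_bumpList (hs : L.Pairwise (· ≥ ·)) (k : ℕ) :
    ((bumpList c L).take k).sum =
      (L.take k).sum + if L.countP (fun x => c < x) < k then 1 else 0 := by
  induction L generalizing k with
  | nil => cases k <;> simp [bumpList]
  | cons a rest ih =>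
    rw [List.pairwise_cons] at hs
    cases k with
    | zero => simp
    | succ k =>
      by_cases h : c < a
      · simp only [bumpList, h, if_true, List.take_succ_cons, List.sum_cons, List.countP_cons,
          decide_true, ih hs.2 k]
        split_ifs <;> omega
      · have hrest : rest.countP (fun x => c < x) = 0 :=
          List.countP_eq_zero.2 fun x hx => by
            simpa only [decide_eq_true_eq, not_lt] using (hs.1 x hx).trans (not_lt.1 h)
        simp only [bumpList, h, ↓reduceIte, List.take_succ_cons, List.sum_cons, decide_false,
          Bool.false_eq_true, not_false_eq_true, List.countP_cons_of_neg, hrest,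
          Nat.zero_lt_succ]
        omega

theorem sum_take_bumpList_mono (hs : L.Pairwise (· ≥ ·)) {c' : ℕ} (hc : c' ≤ c) (k : ℕ) :
    ((bumpList c' L).take k).sum ≤ ((bumpList c L).take k).sum := by
  have hcount : L.countP (fun x => c < x) ≤ L.countP (fun x => c' < x) :=
    List.countP_mono_left fun x _ hx => by simp only [decide_eq_true_eq] at hx ⊢; omega
  rw [sum_take_bumpList hs, sum_take_bumpList hs]
  split_ifs <;> omega

theorem succ_le_countP_getD_le (hs : L.Pairwise (· ≥ ·)) {d : ℕ} (hd : d < L.length) :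
    d + 1 ≤ L.countP (fun x => L.getD d 0 ≤ x) := by
  have htake : ∀ x ∈ L.take (d + 1), L.getD d 0 ≤ x := by
    intro x hx
    obtain ⟨j, hj, rfl⟩ := List.mem_take_iff_getElem.1 hx
    rw [List.getD_eq_getElem _ _ hd]
    rcases Nat.lt_or_ge j d with hjd | hjd
    · exact List.pairwise_iff_getElem.1 hs j d _ hd hjd
    · simp only [show j = d by omega, le_refl]
  calc d + 1 = (L.take (d + 1)).countP (fun x => L.getD d 0 ≤ x) := by
        rw [List.countP_eq_length.2 (by simpa using htake), List.length_take]; omega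
    _ ≤ L.countP (fun x => L.getD d 0 ≤ x) := (List.take_sublist _ _).countP_le

end BumpList

namespace Partition

variable {N N' : ℕ}

/-- The size is a parameter because the sizes met in `statement16`, `n + l - 1 + 1` and
`n + 1 + l - 1`, are only propositionally equal. -/
def bump (mu : Partition N) (c : ℕ) (hN : N + 1 = N') : Partition N' where
  parts := bumpList c mu.parts
  sorted := pairwise_bumpList mu.sorted
  pos _ hp := (mem_bumpList hp).elim (mu.pos _) And.left
  sum_eq := by rw [sum_bumpList, mu.sum_eq, hN]

theorem partOne_le_partOne_bump (mu : Partition N) (c : ℕ) (hN : N + 1 = N') :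
    partOne mu ≤ partOne (mu.bump c hN) :=
  headD_le_headD_bumpList

theorem getD_mem_or_eq_zero (mu : Partition N) (i : ℕ) :
    mu.parts.getD i 0 ∈ mu.parts ∨ mu.parts.getD i 0 = 0 := by
  by_cases hi : i < mu.parts.length
  · exact Or.inl (List.getD_eq_getElem _ _ hi ▸ List.getElem_mem hi)
  · exact Or.inr (List.getD_eq_default _ _ (by omega))

theorem addBoxMultiset_eq (mu : Partition N) (i : ℕ) :
    addBoxMultiset mu i =
      (mu.parts : Multiset ℕ).erase (mu.parts.getD (i - 1) 0) + {mu.parts.getD (i - 1) 0 + 1} := by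
  unfold addBoxMultiset
  split_ifs with hi
  · rfl
  · rw [List.getD_eq_default _ _ (by omega),
      Multiset.erase_of_notMem fun h => (mu.pos 0 (Multiset.mem_coe.1 h)).false]

theorem parts_eq_bumpList_of_isAddBox {mu : Partition N} {i : ℕ} {nu : Partition N'}
    (h : IsAddBox mu i nu) : nu.parts = bumpList (mu.parts.getD (i - 1) 0) mu.parts := by
  refine List.Perm.eq_of_pairwise' nu.sorted (pairwise_bumpList mu.sorted)
    (Multiset.coe_eq_coe.1 ?_)
  rw [h, addBoxMultiset_eq, coe_bumpList mu.sorted mu.pos (mu.getD_mem_or_eq_zero _)]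

theorem domLE_bump_of_isAddBox {mu : Partition N} {i : ℕ} {nu : Partition N'}
    (h : IsAddBox mu i nu) (hN : N + 1 = N') {c : ℕ} (hc : mu.parts.getD (i - 1) 0 ≤ c) :
    domLE nu (mu.bump c hN) := by
  intro k
  rw [parts_eq_bumpList_of_isAddBox h]
  exact sum_take_bumpList_mono mu.sorted hc k

end Partition

section Multiplicities

theorem map_count_add_singleton {α : Type*} [DecidableEq α] (M : Multiset α) (t : α) :
    (M + {t}).toFinset.val.map (fun x => (M + {t}).count x) =
      (M.toFinset.val.map fun x => M.count x).erase (M.count t) + {M.count t + 1} := by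
  have hcount : ∀ x ≠ t, (M + {t}).count x = M.count x := fun x hx => by
    rw [Multiset.count_add, Multiset.count_singleton, if_neg hx, add_zero]
  rw [add_comm _ ({M.count t + 1} : Multiset ℕ), Multiset.singleton_add]
  by_cases ht : t ∈ M
  · have hsplit : ∀ f : α → ℕ, M.toFinset.val.map f = f t ::ₘ (M.toFinset.erase t).val.map f :=
      fun f => by
        rw [← Multiset.map_cons, Finset.erase_val, Multiset.cons_erase (by simpa using ht)]
    rw [show (M + {t}).toFinset = M.toFinset by simp [ht], hsplit, hsplit,
      Multiset.erase_cons_head, Multiset.count_add, Multiset.count_singleton_self,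
      Multiset.map_congr rfl fun x hx => hcount x (Finset.ne_of_mem_erase hx)]
  · have hzero : M.count t = 0 := Multiset.count_eq_zero.2 ht
    rw [show (M + {t}).toFinset = insert t M.toFinset by
        rw [Multiset.toFinset_add, Multiset.toFinset_singleton, Finset.union_comm,
          ← Finset.insert_eq],
      Finset.insert_val_of_notMem (by simpa using ht), Multiset.map_cons, hzero,
      Multiset.erase_of_notMem (by simp [Multiset.count_eq_zero]), Multiset.count_add,
      Multiset.count_singleton_self, hzero,
      Multiset.map_congr rfl fun x hx => hcount x (by rintro rfl; simp_all)]

theorem lamL_snoc {K : Type*} {n : ℕ} [NeZero n] (l : ℕ) (a : Fin n → K) (t : K) :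
    lamL K l (Fin.snoc a t : Fin (n + 1) → K) = lamL K l a + {t} := by
  have h0 : (Fin.snoc a t : Fin (n + 1) → K) 0 = a 0 := Fin.snoc_castSucc (α := fun _ => K) t a 0
  have hcast : (Fin.snoc a t : Fin (n + 1) → K) ∘ Fin.castSuccEmb = a :=
    funext fun i => Fin.snoc_castSucc (α := fun _ => K) t a i
  rw [lamL, lamL, h0, add_assoc, Fin.univ_castSuccEmb, Finset.cons_val, Multiset.map_cons,
    Fin.snoc_last, Finset.map_val, Multiset.map_map, hcast, ← Multiset.singleton_add,
    add_comm ({t} : Multiset K)]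

variable {K : Type*} [DecidableEq K] {N N' : ℕ}

theorem isMultPartition_add_singleton {M : Multiset K} {mu : Partition N}
    (h : IsMultPartition K M mu) (t : K) (hN : N + 1 = N') :
    IsMultPartition K (M + {t}) (mu.bump (M.count t) hN) := by
  have hc : M.count t ∈ mu.parts ∨ M.count t = 0 := by
    by_cases ht : t ∈ M
    · refine Or.inl (Multiset.mem_coe.1 ?_)
      rw [h]
      exact Multiset.mem_map_of_mem _ (by simpa using ht)
    · exact Or.inr (Multiset.count_eq_zero.2 ht)
  unfold IsMultPartition at h ⊢
  rw [map_count_add_singleton, ← h]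
  exact coe_bumpList mu.sorted mu.pos hc

theorem exists_finset_lt_card_getD_le_count [Infinite K] {M : Multiset K} {mu : Partition N}
    (h : IsMultPartition K M mu) (d : ℕ) :
    ∃ s : Finset K, d < s.card ∧ ∀ t ∈ s, mu.parts.getD d 0 ≤ M.count t := by
  by_cases hd : d < mu.parts.length
  · refine ⟨M.toFinset.filter fun t => mu.parts.getD d 0 ≤ M.count t, ?_,
      fun t ht => (Finset.mem_filter.1 ht).2⟩
    have hcard : (M.toFinset.filter fun t => mu.parts.getD d 0 ≤ M.count t).card =
        mu.parts.countP (fun x => mu.parts.getD d 0 ≤ x) := by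
      rw [← Multiset.coe_countP, h, Multiset.countP_map, Finset.card_def, Finset.filter_val]
    rw [hcard]
    exact succ_le_countP_getD_le mu.sorted hd
  · obtain ⟨s, hs⟩ := Infinite.exists_subset_card_eq K (d + 1)
    refine ⟨s, by omega, fun t _ => ?_⟩
    rw [List.getD_eq_default _ _ (by omega)]
    exact Nat.zero_le _

end Multiplicities

section LastVariable

variable {R : Type*} [CommRing R] {n d : ℕ}

noncomputable def toPolynomialLast (n : ℕ) :
    MvPolynomial (Fin (n + 1)) R →ₐ[R] Polynomial (MvPolynomial (Fin n) R) :=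
  aeval (Fin.lastCases Polynomial.X fun i => Polynomial.C (X i))

theorem toPolynomialLast_rename_castSucc (q : MvPolynomial (Fin n) R) :
    toPolynomialLast n (rename Fin.castSucc q) = Polynomial.C q := by
  have h : (Fin.lastCases Polynomial.X fun i => Polynomial.C (X i)) ∘ Fin.castSucc =
      (Polynomial.CAlgHom (R := R)) ∘ (X : Fin n → MvPolynomial (Fin n) R) :=
    funext fun i => by simp
  rw [toPolynomialLast, aeval_rename, h, ← aeval_unique]
  rfl

theorem toPolynomialLast_X_last : toPolynomialLast (R := R) n (X (Fin.last n)) = Polynomial.X := by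
  rw [toPolynomialLast, aeval_X, Fin.lastCases_last]

theorem coeff_sum_range_C_mul_X_pow {S : Type*} [Semiring S] (e : ℕ → S) {i : ℕ} (hi : i ≤ d) :
    (∑ j ∈ Finset.range (d + 1), Polynomial.C (e j) * Polynomial.X ^ j).coeff i = e i := by
  simp [Polynomial.finsetSum_coeff, Nat.lt_succ_of_le hi]

theorem dvd_of_rename_dvd_sum_mul_X_last_pow (q : MvPolynomial (Fin n) R)
    (g : ℕ → MvPolynomial (Fin n) R)
    (h : rename Fin.castSucc q ∣
      ∑ j ∈ Finset.range (d + 1), rename Fin.castSucc (g j) * X (Fin.last n) ^ j)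
    {i : ℕ} (hi : i ≤ d) : q ∣ g i := by
  have hC := map_dvd (toPolynomialLast n) h
  simp only [map_sum, map_mul, map_pow, toPolynomialLast_rename_castSucc,
    toPolynomialLast_X_last] at hC
  simpa [coeff_sum_range_C_mul_X_pow _ hi] using (Polynomial.C_dvd_iff_dvd_coeff _ _).1 hC i

theorem eval_snoc_sum_mul_X_last_pow (g : ℕ → MvPolynomial (Fin n) R) (a : Fin n → R) (t : R) :
    eval (Fin.snoc a t) (∑ j ∈ Finset.range (d + 1), rename Fin.castSucc (g j) * X (Fin.last n) ^ j)
      = (∑ j ∈ Finset.range (d + 1), Polynomial.C (eval a (g j)) * Polynomial.X ^ j).eval t := by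
  have hcast : (Fin.snoc a t : Fin (n + 1) → R) ∘ Fin.castSucc = a :=
    funext fun i => Fin.snoc_castSucc (α := fun _ => R) t a i
  simp [Polynomial.eval_finsetSum, eval_rename, hcast]

theorem eval_eq_zero_of_eval_snoc_eq_zero [IsDomain R] (g : ℕ → MvPolynomial (Fin n) R)
    (a : Fin n → R) {s : Finset R} (hs : d < s.card)
    (h : ∀ t ∈ s, eval (Fin.snoc a t)
      (∑ j ∈ Finset.range (d + 1), rename Fin.castSucc (g j) * X (Fin.last n) ^ j) = 0)
    {i : ℕ} (hi : i ≤ d) : eval a (g i) = 0 := by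
  rw [← coeff_sum_range_C_mul_X_pow (fun j => eval a (g j)) hi]
  set p := ∑ j ∈ Finset.range (d + 1), Polynomial.C (eval a (g j)) * Polynomial.X ^ j
  have hdeg : p.natDegree ≤ d :=
    Polynomial.natDegree_sum_le_of_forall_le _ _ fun j hj =>
      (Polynomial.natDegree_C_mul_X_pow_le _ _).trans (Finset.mem_range_succ_iff.1 hj)
  have hp : p = 0 := Polynomial.eq_zero_of_natDegree_lt_card_of_eval_eq_zero' p s
    (fun t ht => eval_snoc_sum_mul_X_last_pow g a t ▸ h t ht) (hdeg.trans_lt hs)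
  rw [hp, Polynomial.coeff_zero]

end LastVariable

section DifferenceProducts

variable {K : Type*} [Field K]

theorem rename_deltaList {n n' : ℕ} (φ : Fin n → Fin n') (L : List (Fin n)) :
    rename φ (deltaList K L) = deltaList K (L.map φ) := by
  induction L with
  | nil => simp [deltaList]
  | cons a rest ih => simp [deltaList, ih, map_list_prod, List.map_map, Function.comp_def]

theorem rename_castSucc_deltaM {n m : ℕ} (hm : m ≤ n) :
    rename Fin.castSucc (deltaM K n m) = deltaM K (n + 1) m := by
  rw [deltaM, deltaM, rename_deltaList, List.finRange_succ_last,
    List.take_append_of_le_length (by simpa using hm), List.map_take]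

end DifferenceProducts

theorem statement16_general (K : Type*) [Field K] [Infinite K] [DecidableEq K] (n l m d : ℕ)
    [NeZero n] (hmn : m < n + 1)
    (F : Set (Partition (n + 1 + l - 1)))
    (hFup : ∀ mu ∈ F, ∀ nu : Partition (n + 1 + l - 1), l ≤ partOne nu → domLE mu nu → nu ∈ F)
    (g : ℕ → MvPolynomial (Fin n) K)
    (f : MvPolynomial (Fin (n + 1)) K)
    (hf : f = ∑ i ∈ Finset.range (d + 1),
        MvPolynomial.rename Fin.castSucc (g i) * MvPolynomial.X (Fin.last n) ^ i)
    (hfJ : f ∈ Ideal.span {deltaM K (n + 1) m} ⊓ vanishingIdeal K (n + 1)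
        (fun a => ∃ mu ∈ F, IsMultPartition K (lamL K l a) mu)) :
    ∀ i ≤ d, g i ∈ Ideal.span {deltaM K n m} ⊓ vanishingIdeal K n (fun a =>
      ∃ mu : Partition (n + l - 1),
        (l ≤ partOne mu ∧ ∃ nu ∈ F, IsAddBox mu (d + 1) nu) ∧
        IsMultPartition K (lamL K l a) mu) := by
  obtain ⟨hfΔ, hfF⟩ := Ideal.mem_inf.1 hfJ
  subst hf
  intro i hi
  refine Ideal.mem_inf.2 ⟨?_, ?_⟩
  · rw [Ideal.mem_span_singleton] at hfΔ ⊢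
    rw [← rename_castSucc_deltaM (by omega)] at hfΔ
    exact dvd_of_rename_dvd_sum_mul_X_last_pow _ g hfΔ hi
  · rintro a ⟨mu, ⟨hlmu, nu, hnuF, hbox⟩, hmu⟩
    have hN : n + l - 1 + 1 = n + 1 + l - 1 := by have := NeZero.pos n; omega
    obtain ⟨s, hs, hcount⟩ := exists_finset_lt_card_getD_le_count hmu d
    refine eval_eq_zero_of_eval_snoc_eq_zero g a hs (fun t ht => hfF _ ?_) hi
    refine ⟨mu.bump ((lamL K l a).count t) hN, hFup nu hnuF _ ?_ ?_, ?_⟩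
    · exact hlmu.trans (mu.partOne_le_partOne_bump _ hN)
    · exact Partition.domLE_bump_of_isAddBox hbox hN (hcount t ht)
    · rw [lamL_snoc]
      exact isMultPartition_add_singleton hmu t hN

/-- Lemma `keylemma3`. If m is less than the number of ambient
variables (here n+1) and f = Σ gᵢ xₙⁱ ∈ J_{l,m,F} = (Δ_m) ∩ J_{l,F}, then each
gᵢ ∈ J_{l,m,F_{d+1}} = (Δ_m) ∩ J_{l,F_{d+1}} in the body ring. -/
theorem statement16 (K : Type*) [Field K] [Infinite K] [DecidableEq K] (n l m d : ℕ)
    [NeZero n] (hl : 0 < l) (hm : 1 ≤ m) (hmn : m < n + 1)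
    (F : Set (Partition (n + 1 + l - 1)))
    (hFsub : ∀ mu ∈ F, l ≤ partOne mu)
    (hFup : ∀ mu ∈ F, ∀ nu : Partition (n + 1 + l - 1), l ≤ partOne nu → domLE mu nu → nu ∈ F)
    (g : ℕ → MvPolynomial (Fin n) K) (hgd : g d ≠ 0)
    (f : MvPolynomial (Fin (n + 1)) K)
    (hf : f = ∑ i ∈ Finset.range (d + 1),
        MvPolynomial.rename Fin.castSucc (g i) * MvPolynomial.X (Fin.last n) ^ i)
    (hfJ : f ∈ Ideal.span {deltaM K (n + 1) m} ⊓ vanishingIdeal K (n + 1)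
        (fun a => ∃ mu ∈ F, IsMultPartition K (lamL K l a) mu)) :
    ∀ i ≤ d, g i ∈ Ideal.span {deltaM K n m} ⊓ vanishingIdeal K n (fun a =>
      ∃ mu : Partition (n + l - 1),
        (l ≤ partOne mu ∧ ∃ nu ∈ F, IsAddBox mu (d + 1) nu) ∧
        IsMultPartition K (lamL K l a) mu) :=
  statement16_general K n l m d hmn F hFup g f hf hfJ

end SpechtLL
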